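/- Let H be a Hilbert space with orthonormal basis (e_n) and P_α the projection onto the closed span of {e_{2n} + α_n e_{2n+1}} for α ∈ [0,1]^ℕ. If α, β ∈ [0,1]^ℕ and α_n - β_n → 0, then P_α - P_β is a compact operator. -/

import Mathlib

/-!
`P_α` maps `span {e (2n), e (2n+1)}` into itself, with matrix entries `1/(1+α_n²)`,
`α_n/(1+α_n²)` and `α_n²/(1+α_n²)`. These are 1-Lipschitz functions of `α_n`, so `P_α - P_β` is
block diagonal with `2 × 2` blocks of norm `O(|α_n - β_n|) → 0`. Such an operator is uniformly
small on the orthogonal complement of finitely many blocks, hence a norm limit of finite-rank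
operators.
-/

/-- The orthogonal projection onto the closed linear span of
`{e (2n) + α n • e (2n+1) : n ∈ ℕ}`, viewed as an operator `H →L[ℂ] H`. -/
noncomputable def Pproj {H : Type*} [NormedAddCommGroup H] [InnerProductSpace ℂ H]
    [CompleteSpace H] (e : HilbertBasis ℕ ℂ H) (α : ℕ → ℝ) : H →L[ℂ] H :=
  let S : Submodule ℂ H :=
    Submodule.span ℂ (Set.range fun n => e (2 * n) + ((α n : ℝ) : ℂ) • e (2 * n + 1))
  haveI : CompleteSpace S.topologicalClosure := S.isClosed_topologicalClosure.completeSpace_coe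
  S.topologicalClosure.subtypeL.comp (S.topologicalClosure.orthogonalProjectionOnto)

open Filter Topology Submodule
open scoped InnerProductSpace

theorem HasSum.even_add_odd_pairs {f : ℕ → ℝ} {a : ℝ} (hf : HasSum f a) :
    HasSum (fun n => f (2 * n) + f (2 * n + 1)) a := by
  have he : HasSum (fun n => f (2 * n)) (∑' n, f (2 * n)) :=
    (hf.summable.comp_injective (i := fun n : ℕ => 2 * n) (by intro a b h; simpa using h)).hasSum
  have ho : HasSum (fun n => f (2 * n + 1)) (∑' n, f (2 * n + 1)) :=
    (hf.summable.comp_injective (i := fun n : ℕ => 2 * n + 1)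
      (by intro a b h; simpa using h)).hasSum
  rw [hf.unique (he.even_add_odd ho)]
  exact he.add ho

section Compact

variable {𝕜 E F : Type*} [RCLike 𝕜] [NormedAddCommGroup E] [InnerProductSpace 𝕜 E]
  [NormedAddCommGroup F] [NormedSpace 𝕜 F] [CompleteSpace F]

theorem isCompactOperator_of_forall_norm_le_on_orthogonal (T : E →L[𝕜] F)
    (hT : ∀ ε > 0, ∃ U : Submodule 𝕜 E, FiniteDimensional 𝕜 U ∧ ∀ x ∈ Uᗮ, ‖T x‖ ≤ ε * ‖x‖) :
    IsCompactOperator T := by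
  refine isClosed_setOfPred_isCompactOperator.closure_subset
    (Metric.mem_closure_iff.2 fun ε hε => ?_)
  obtain ⟨U, hU, hTU⟩ := hT (ε / 2) (half_pos hε)
  refine ⟨T ∘L U.starProjection, ?_, ?_⟩
  · exact ((isCompactOperator_of_locallyCompactSpace_dom U.orthogonalProjectionOnto).clm_comp
      U.subtypeL).clm_comp T
  · rw [dist_eq_norm]
    refine lt_of_le_of_lt (ContinuousLinearMap.opNorm_le_bound _ (by positivity) fun x => ?_)
      (half_lt_self hε)
    have hx : (T - T ∘L U.starProjection) x = T (Uᗮ.starProjection x) := by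
      simp [map_sub]
    rw [hx]
    exact (hTU _ (Uᗮ.starProjection_apply_mem x)).trans
      (by gcongr; exact Uᗮ.norm_starProjection_apply_le x)

end Compact

section InnerProductSpace

variable {𝕜 E ι : Type*} [RCLike 𝕜] [NormedAddCommGroup E] [InnerProductSpace 𝕜 E]

theorem HilbertBasis.hasSum_norm_sq_inner (b : HilbertBasis ι 𝕜 E) (x : E) :
    HasSum (fun i => ‖⟪b i, x⟫_𝕜‖ ^ 2) (‖x‖ ^ 2) := by
  have hre := (b.hasSum_inner_mul_inner x x).mapL (RCLike.reCLM (K := 𝕜))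
  have hterm : ∀ i, RCLike.re (⟪x, b i⟫_𝕜 * ⟪b i, x⟫_𝕜) = ‖⟪b i, x⟫_𝕜‖ ^ 2 := fun i => by
    rw [← inner_conj_symm x (b i), RCLike.conj_mul, ← RCLike.ofReal_pow, RCLike.ofReal_re]
  simpa only [RCLike.reCLM_apply, hterm, inner_self_eq_norm_sq] using hre

theorem HilbertBasis.isCompactOperator_of_norm_sq_inner_pairs_le [CompleteSpace E]
    (b : HilbertBasis ℕ 𝕜 E) (T : E →L[𝕜] E) {γ : ℕ → ℝ} (hγ : Tendsto γ atTop (𝓝 0))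
    (hT : ∀ n x, ‖⟪b (2 * n), T x⟫_𝕜‖ ^ 2 + ‖⟪b (2 * n + 1), T x⟫_𝕜‖ ^ 2
      ≤ γ n * (‖⟪b (2 * n), x⟫_𝕜‖ ^ 2 + ‖⟪b (2 * n + 1), x⟫_𝕜‖ ^ 2)) :
    IsCompactOperator T := by
  refine isCompactOperator_of_forall_norm_le_on_orthogonal T fun ε hε => ?_
  obtain ⟨N, hN⟩ := eventually_atTop.1 (hγ.eventually (Iic_mem_nhds (pow_pos hε 2)))
  refine ⟨span 𝕜 (b '' Set.Iio (2 * N)),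
    FiniteDimensional.span_of_finite 𝕜 ((Set.finite_Iio _).image _), fun x hx => ?_⟩
  have hx0 : ∀ k < 2 * N, ⟪b k, x⟫_𝕜 = 0 := fun k hk =>
    (mem_orthogonal _ _).1 hx _ (subset_span ⟨k, hk, rfl⟩)
  have hpair : ∀ n, ‖⟪b (2 * n), T x⟫_𝕜‖ ^ 2 + ‖⟪b (2 * n + 1), T x⟫_𝕜‖ ^ 2
      ≤ ε ^ 2 * (‖⟪b (2 * n), x⟫_𝕜‖ ^ 2 + ‖⟪b (2 * n + 1), x⟫_𝕜‖ ^ 2) := fun n => by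
    rcases lt_or_ge n N with hn | hn
    · simpa [hx0 (2 * n) (by omega), hx0 (2 * n + 1) (by omega)] using hT n x
    · exact (hT n x).trans (by gcongr; exact hN n hn)
  have hsq : ‖T x‖ ^ 2 ≤ (ε * ‖x‖) ^ 2 := by
    rw [mul_pow]
    exact hasSum_le hpair (b.hasSum_norm_sq_inner (T x)).even_add_odd_pairs
      ((b.hasSum_norm_sq_inner x).even_add_odd_pairs.mul_left _)
  exact (pow_le_pow_iff_left₀ (norm_nonneg _) (by positivity) two_ne_zero).1 hsq

theorem starProjection_topologicalClosure_span_apply [CompleteSpace E] {v : ι → E}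
    (hv : Pairwise fun i j => ⟪v i, v j⟫_𝕜 = 0) {n : ι} {w : E}
    (hw : ∀ m, m ≠ n → ⟪v m, w⟫_𝕜 = 0) :
    (span 𝕜 (Set.range v)).topologicalClosure.starProjection w
      = (⟪v n, w⟫_𝕜 / ⟪v n, v n⟫_𝕜) • v n := by
  refine eq_starProjection_of_mem_orthogonal
    (smul_mem _ _ (le_topologicalClosure _ (subset_span ⟨n, rfl⟩))) ?_
  rw [orthogonal_closure, mem_orthogonal]
  intro u hu
  induction hu using span_induction with
  | mem _ hu =>
    obtain ⟨m, rfl⟩ := hu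
    rw [inner_sub_right, inner_smul_right]
    rcases eq_or_ne m n with rfl | hmn
    · rcases eq_or_ne (v m) 0 with hvm | hvm
      · simp [hvm]
      · rw [div_mul_cancel₀ _ (inner_self_ne_zero.2 hvm), sub_self]
    · rw [hw m hmn, hv hmn, mul_zero, sub_zero]
  | zero => exact inner_zero_left _
  | add _ _ _ _ h₁ h₂ => rw [inner_add_left, h₁, h₂, add_zero]
  | smul _ _ _ h => rw [inner_smul_left, h, mul_zero]

end InnerProductSpace

theorem abs_inv_one_add_sq_sub_inv_le (t s : ℝ) : |(1 + t ^ 2)⁻¹ - (1 + s ^ 2)⁻¹| ≤ |t - s| := by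
  have hd : 0 < (1 + t ^ 2) * (1 + s ^ 2) := by positivity
  rw [inv_sub_inv (by positivity) (by positivity), abs_div, abs_of_pos hd, div_le_iff₀ hd,
    show 1 + s ^ 2 - (1 + t ^ 2) = (t - s) * -(t + s) by ring, abs_mul]
  gcongr
  rw [abs_le]
  constructor <;> nlinarith [sq_nonneg (t - 1), sq_nonneg (s - 1), sq_nonneg (t + 1),
    sq_nonneg (s + 1), mul_nonneg (sq_nonneg t) (sq_nonneg s)]

theorem abs_div_one_add_sq_sub_div_le (t s : ℝ) :
    |t / (1 + t ^ 2) - s / (1 + s ^ 2)| ≤ |t - s| := by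
  have hd : 0 < (1 + t ^ 2) * (1 + s ^ 2) := by positivity
  rw [div_sub_div _ _ (by positivity) (by positivity), abs_div, abs_of_pos hd, div_le_iff₀ hd,
    show t * (1 + s ^ 2) - (1 + t ^ 2) * s = (t - s) * (1 - t * s) by ring, abs_mul]
  gcongr
  rw [abs_le]
  constructor <;> nlinarith [sq_nonneg (t - s), sq_nonneg (t + s),
    mul_nonneg (sq_nonneg t) (sq_nonneg s)]

theorem abs_sq_div_one_add_sq_sub_le (t s : ℝ) :
    |t ^ 2 / (1 + t ^ 2) - s ^ 2 / (1 + s ^ 2)| ≤ |t - s| := by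
  have key : ∀ r : ℝ, r ^ 2 / (1 + r ^ 2) = 1 - (1 + r ^ 2)⁻¹ := fun r => by
    field_simp; ring
  rw [key, key, sub_sub_sub_cancel_left, abs_sub_comm]
  exact abs_inv_one_add_sq_sub_inv_le t s

theorem norm_sq_ofReal_mul_add_ofReal_mul_le {a b δ : ℝ} (ha : |a| ≤ δ) (hb : |b| ≤ δ)
    (z w : ℂ) : ‖(a : ℂ) * z + b * w‖ ^ 2 ≤ 2 * δ ^ 2 * (‖z‖ ^ 2 + ‖w‖ ^ 2) := by
  have hle : ‖(a : ℂ) * z + b * w‖ ≤ δ * (‖z‖ + ‖w‖) := by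
    refine (norm_add_le _ _).trans ?_
    simp only [norm_mul, Complex.norm_real, Real.norm_eq_abs]
    nlinarith [norm_nonneg z, norm_nonneg w]
  calc ‖(a : ℂ) * z + b * w‖ ^ 2 ≤ (δ * (‖z‖ + ‖w‖)) ^ 2 := by gcongr
    _ ≤ 2 * δ ^ 2 * (‖z‖ ^ 2 + ‖w‖ ^ 2) := by nlinarith [sq_nonneg (‖z‖ - ‖w‖), sq_nonneg δ]

namespace Pproj

variable {H : Type*} [NormedAddCommGroup H] [InnerProductSpace ℂ H]
  (e : HilbertBasis ℕ ℂ H) (α : ℕ → ℝ)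

noncomputable def blockVector (n : ℕ) : H := e (2 * n) + ((α n : ℝ) : ℂ) • e (2 * n + 1)

theorem inner_blockVector_left (n : ℕ) (x : H) :
    ⟪blockVector e α n, x⟫_ℂ = ⟪e (2 * n), x⟫_ℂ + α n * ⟪e (2 * n + 1), x⟫_ℂ := by
  simp [blockVector]

theorem inner_blockVector_even (m n : ℕ) :
    ⟪blockVector e α m, e (2 * n)⟫_ℂ = if m = n then 1 else 0 := by
  simp only [inner_blockVector_left, orthonormal_iff_ite.1 e.orthonormal]
  split_ifs <;> first | omega | simp

theorem inner_blockVector_odd (m n : ℕ) :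
    ⟪blockVector e α m, e (2 * n + 1)⟫_ℂ = if m = n then (α m : ℂ) else 0 := by
  simp only [inner_blockVector_left, orthonormal_iff_ite.1 e.orthonormal]
  split_ifs <;> first | omega | simp

theorem inner_blockVector_blockVector (m n : ℕ) :
    ⟪blockVector e α m, blockVector e α n⟫_ℂ = if m = n then 1 + (α m : ℂ) ^ 2 else 0 := by
  rw [blockVector.eq_1 e α n, inner_add_right, inner_smul_right, inner_blockVector_even,
    inner_blockVector_odd]
  split_ifs with h
  · subst h; ring
  · simp

theorem pairwise_inner_blockVector :
    Pairwise fun m n => ⟪blockVector e α m, blockVector e α n⟫_ℂ = 0 := fun m n h =>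
  (inner_blockVector_blockVector e α m n).trans (if_neg h)

variable [CompleteSpace H]

theorem eq_starProjection :
    Pproj e α = (span ℂ (Set.range (blockVector e α))).topologicalClosure.starProjection :=
  rfl

theorem apply_even (n : ℕ) :
    Pproj e α (e (2 * n)) = (((1 + α n ^ 2)⁻¹ : ℝ) : ℂ) • blockVector e α n := by
  rw [eq_starProjection, starProjection_topologicalClosure_span_apply
    (pairwise_inner_blockVector e α) (n := n) fun m hm => by rw [inner_blockVector_even, if_neg hm],
    inner_blockVector_even, inner_blockVector_blockVector, if_pos rfl, if_pos rfl]
  push_cast; ring_nf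

theorem apply_odd (n : ℕ) :
    Pproj e α (e (2 * n + 1)) = ((α n / (1 + α n ^ 2) : ℝ) : ℂ) • blockVector e α n := by
  rw [eq_starProjection, starProjection_topologicalClosure_span_apply
    (pairwise_inner_blockVector e α) (n := n) fun m hm => by rw [inner_blockVector_odd, if_neg hm],
    inner_blockVector_odd, inner_blockVector_blockVector, if_pos rfl, if_pos rfl]
  push_cast; ring_nf

theorem inner_even_apply (n : ℕ) (x : H) :
    ⟪e (2 * n), Pproj e α x⟫_ℂ = (((1 + α n ^ 2)⁻¹ : ℝ) : ℂ) * ⟪e (2 * n), x⟫_ℂ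
      + ((α n / (1 + α n ^ 2) : ℝ) : ℂ) * ⟪e (2 * n + 1), x⟫_ℂ := by
  rw [eq_starProjection, ← inner_starProjection_left_eq_right, ← eq_starProjection, apply_even,
    inner_smul_left, Complex.conj_ofReal, inner_blockVector_left]
  push_cast; ring

theorem inner_odd_apply (n : ℕ) (x : H) :
    ⟪e (2 * n + 1), Pproj e α x⟫_ℂ = ((α n / (1 + α n ^ 2) : ℝ) : ℂ) * ⟪e (2 * n), x⟫_ℂ
      + ((α n ^ 2 / (1 + α n ^ 2) : ℝ) : ℂ) * ⟪e (2 * n + 1), x⟫_ℂ := by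
  rw [eq_starProjection, ← inner_starProjection_left_eq_right, ← eq_starProjection, apply_odd,
    inner_smul_left, Complex.conj_ofReal, inner_blockVector_left]
  push_cast; ring

theorem norm_sq_inner_sub_apply_pair_le (β : ℕ → ℝ) (n : ℕ) (x : H) :
    ‖⟪e (2 * n), (Pproj e α - Pproj e β) x⟫_ℂ‖ ^ 2
        + ‖⟪e (2 * n + 1), (Pproj e α - Pproj e β) x⟫_ℂ‖ ^ 2
      ≤ 4 * (α n - β n) ^ 2 * (‖⟪e (2 * n), x⟫_ℂ‖ ^ 2 + ‖⟪e (2 * n + 1), x⟫_ℂ‖ ^ 2) := by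
  have heven : ⟪e (2 * n), (Pproj e α - Pproj e β) x⟫_ℂ
      = (((1 + α n ^ 2)⁻¹ - (1 + β n ^ 2)⁻¹ : ℝ) : ℂ) * ⟪e (2 * n), x⟫_ℂ
        + ((α n / (1 + α n ^ 2) - β n / (1 + β n ^ 2) : ℝ) : ℂ) * ⟪e (2 * n + 1), x⟫_ℂ := by
    rw [sub_apply, inner_sub_right, inner_even_apply, inner_even_apply]
    push_cast; ring
  have hodd : ⟪e (2 * n + 1), (Pproj e α - Pproj e β) x⟫_ℂ
      = ((α n / (1 + α n ^ 2) - β n / (1 + β n ^ 2) : ℝ) : ℂ) * ⟪e (2 * n), x⟫_ℂ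
        + ((α n ^ 2 / (1 + α n ^ 2) - β n ^ 2 / (1 + β n ^ 2) : ℝ) : ℂ)
          * ⟪e (2 * n + 1), x⟫_ℂ := by
    rw [sub_apply, inner_sub_right, inner_odd_apply, inner_odd_apply]
    push_cast; ring
  rw [heven, hodd, ← sq_abs (α n - β n)]
  linarith [norm_sq_ofReal_mul_add_ofReal_mul_le (abs_inv_one_add_sq_sub_inv_le (α n) (β n))
      (abs_div_one_add_sq_sub_div_le (α n) (β n)) ⟪e (2 * n), x⟫_ℂ ⟪e (2 * n + 1), x⟫_ℂ,
    norm_sq_ofReal_mul_add_ofReal_mul_le (abs_div_one_add_sq_sub_div_le (α n) (β n))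
      (abs_sq_div_one_add_sq_sub_le (α n) (β n)) ⟪e (2 * n), x⟫_ℂ ⟪e (2 * n + 1), x⟫_ℂ]

end Pproj

theorem stmt_18_general {H : Type*} [NormedAddCommGroup H] [InnerProductSpace ℂ H]
    [CompleteSpace H] (e : HilbertBasis ℕ ℂ H)
    (α β : ℕ → ℝ)
    (h : Tendsto (fun n => α n - β n) atTop (nhds 0)) :
    IsCompactOperator (Pproj e α - Pproj e β) :=
  e.isCompactOperator_of_norm_sq_inner_pairs_le _ (γ := fun n => 4 * (α n - β n) ^ 2)
    (by simpa using (h.pow 2).const_mul 4) (Pproj.norm_sq_inner_sub_apply_pair_le e α β)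

theorem stmt_18 {H : Type*} [NormedAddCommGroup H] [InnerProductSpace ℂ H]
    [CompleteSpace H] (e : HilbertBasis ℕ ℂ H)
    (α β : ℕ → ℝ) (hα : ∀ n, α n ∈ Set.Icc (0:ℝ) 1) (hβ : ∀ n, β n ∈ Set.Icc (0:ℝ) 1)
    (h : Tendsto (fun n => α n - β n) atTop (nhds 0)) :
    IsCompactOperator (Pproj e α - Pproj e β) :=
  stmt_18_general e α β h
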